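/- Let κ ∈ ℝ (not zero or a negative integer) and c ∈ ℂ with c ≠ 0 satisfy (2κ/e)(4 sin 1 + 3 − e) ≥ (e+1)|c| + 4(e−1)³ + 6(e−1)² + 6/e − 12/e². Then the function χ(z) = (6κ/c)(1 − u_{κ,c}(z)) belongs to the class K_e of exponential convex functions. -/

import Mathlib

/-!
Writing `χ = ∑ Aₙ zⁿ`, one has `A₀ = 0`, `A₁ = 1`, and the hypothesis forces `κ > 0` and
`15‖c‖ ≤ 14κ`. Under these, a ratio argument gives `n (n - 1) ‖Aₙ‖ ≤ 5^(1 - n)` for `n ≥ 2`, so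
`‖χ' - 1‖ ≤ 1/4` and `‖χ''‖ ≤ 1/4` on the disk. Then `w = z χ''/χ'` has `‖w‖ ≤ 1/3`, and
`1 + w = exp (log (1 + w))` with `‖log (1 + w)‖ ≤ 3/2 ‖w‖ < 1`.
-/

open Complex Metric Set

noncomputable def poch (x : ℂ) (n : ℕ) : ℂ := ∏ k ∈ Finset.range n, (x + k)

/-- The class `P_e`: `p` is analytic on the unit disk, `p 0 = 1`, and `p` maps the
unit disk into `exp(𝔻)` (equivalently, `p` is subordinate to `exp`). -/
def memPe (p : ℂ → ℂ) : Prop :=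
  AnalyticOnNhd ℂ p (Metric.ball 0 1) ∧ p 0 = 1 ∧
    ∀ z ∈ Metric.ball (0:ℂ) 1, p z ∈ Complex.exp '' Metric.ball 0 1

/-- The class `K_e` of exponential convex functions. -/
def memKe (f : ℂ → ℂ) : Prop :=
  AnalyticOnNhd ℂ f (Metric.ball 0 1) ∧ f 0 = 0 ∧ deriv f 0 = 1 ∧
    (∀ z ∈ Metric.ball (0:ℂ) 1, deriv f z ≠ 0) ∧
    memPe (fun z => 1 + z * deriv (deriv f) z / deriv f z)

/-- The class `S*_e` of exponential starlike functions. -/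
def memSe (f : ℂ → ℂ) : Prop :=
  AnalyticOnNhd ℂ f (Metric.ball 0 1) ∧ f 0 = 0 ∧ deriv f 0 = 1 ∧
    (∀ z ∈ Metric.ball (0:ℂ) 1, z ≠ 0 → f z ≠ 0) ∧
    memPe (fun z => if z = 0 then 1 else z * deriv f z / f z)

/-- The normalized generalized Struve function of the first kind
`u_{κ,c}(z) = ∑_{n≥0} ((−c/4)^n / ((3/2)_n (κ)_n)) z^n`. -/
noncomputable def struveU (κ c : ℂ) (z : ℂ) : ℂ :=
  ∑' n : ℕ, (-c / 4) ^ n / (poch (3/2) n * poch κ n) * z ^ n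

def derivCoeff (a : ℕ → ℂ) (n : ℕ) : ℂ := (n + 1) * a (n + 1)

section PowerSeries

variable {a : ℕ → ℂ}

lemma norm_le_norm_derivCoeff (n : ℕ) : ‖a (n + 1)‖ ≤ ‖derivCoeff a n‖ := by
  rw [derivCoeff, norm_mul]
  refine le_mul_of_one_le_left (norm_nonneg _) ?_
  rw [← Nat.cast_add_one, Complex.norm_natCast]
  exact_mod_cast Nat.le_add_left 1 n

lemma summable_norm_of_summable_norm_derivCoeff (h : Summable fun n => ‖derivCoeff a n‖) :
    Summable fun n => ‖a n‖ :=
  (summable_nat_add_iff 1).mp <|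
    h.of_nonneg_of_le (fun _ => norm_nonneg _) norm_le_norm_derivCoeff

lemma tsum_mul_zero_pow : ∑' n, a n * 0 ^ n = a 0 := by
  rw [tsum_eq_single 0 fun n hn => by rw [zero_pow hn, mul_zero], pow_zero, mul_one]

lemma norm_mul_pow_le (n : ℕ) {z : ℂ} (hz : ‖z‖ ≤ 1) : ‖a n * z ^ n‖ ≤ ‖a n‖ := by
  rw [norm_mul, norm_pow]
  exact mul_le_of_le_one_right (norm_nonneg _) (pow_le_one₀ (norm_nonneg _) hz)

lemma norm_tsum_mul_pow_le (ha : Summable fun n => ‖a n‖) {z : ℂ} (hz : ‖z‖ ≤ 1) :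
    ‖∑' n, a n * z ^ n‖ ≤ ∑' n, ‖a n‖ := by
  have hsum : Summable fun n => ‖a n * z ^ n‖ :=
    ha.of_nonneg_of_le (fun _ => norm_nonneg _) (norm_mul_pow_le · hz)
  exact (norm_tsum_le_tsum_norm hsum).trans (hsum.tsum_le_tsum (norm_mul_pow_le · hz) ha)

lemma norm_tsum_mul_pow_sub_le (ha : Summable fun n => ‖a n‖) {z : ℂ} (hz : ‖z‖ ≤ 1) :
    ‖∑' n, a n * z ^ n - a 0‖ ≤ ∑' n, ‖a (n + 1)‖ := by
  have ha' : Summable fun n => ‖a (n + 1)‖ := (summable_nat_add_iff 1).mpr ha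
  have hsum : Summable fun n => a n * z ^ n := .of_norm_bounded ha (norm_mul_pow_le · hz)
  have hshift : ∑' n, a n * z ^ n - a 0 = z * ∑' n, a (n + 1) * z ^ n := by
    rw [hsum.tsum_eq_zero_add, pow_zero, mul_one, add_sub_cancel_left, ← tsum_mul_left]
    exact tsum_congr fun n => by ring
  rw [hshift, norm_mul]
  exact (mul_le_of_le_one_left (norm_nonneg _) hz).trans (norm_tsum_mul_pow_le ha' hz)

lemma hasDerivAt_tsum_mul_pow (ha : Summable fun n => ‖a n‖) {z : ℂ} (hz : z ∈ ball (0 : ℂ) 1) :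
    HasDerivAt (fun w => ∑' n, a n * w ^ n) (∑' n, derivCoeff a n * z ^ n) z := by
  have hbound (n : ℕ) (w : ℂ) (hw : w ∈ ball (0 : ℂ) 1) : ‖a n * w ^ n‖ ≤ ‖a n‖ :=
    norm_mul_pow_le n (mem_ball_zero_iff.mp hw).le
  have hdiff (n : ℕ) : DifferentiableOn ℂ (fun w => a n * w ^ n) (ball 0 1) :=
    (differentiable_id.pow n).const_mul (a n) |>.differentiableOn
  have hsum := Complex.hasSum_deriv_of_summable_norm ha hdiff isOpen_ball hbound hz
  have hderiv := (Complex.differentiableOn_tsum_of_summable_norm ha hdiff isOpen_ball hbound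
    |>.differentiableAt (isOpen_ball.mem_nhds hz)).hasDerivAt
  have hterm (n : ℕ) : deriv (fun w => a (n + 1) * w ^ (n + 1)) z = derivCoeff a n * z ^ n := by
    rw [deriv_const_mul _ (differentiableAt_pow _), deriv_pow_field, derivCoeff]
    push_cast
    ring
  have hshift := (hasSum_nat_add_iff' 1).mpr hsum
  simp only [hterm, Finset.range_one, Finset.sum_singleton, pow_zero, mul_one, deriv_const,
    sub_zero] at hshift
  rwa [hshift.tsum_eq]

lemma norm_derivCoeff_derivCoeff (a : ℕ → ℂ) (n : ℕ) :
    ‖derivCoeff (derivCoeff a) n‖ = (n + 1) * (n + 2) * ‖a (n + 2)‖ := by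
  simp only [derivCoeff, norm_mul, ← Nat.cast_add_one, Complex.norm_natCast]
  push_cast
  ring

end PowerSeries

lemma memPe_of_norm_sub_one_le {p : ℂ → ℂ} (hp : AnalyticOnNhd ℂ p (ball 0 1)) (hp0 : p 0 = 1)
    (hle : ∀ z ∈ ball (0 : ℂ) 1, ‖p z - 1‖ ≤ 1 / 2) : memPe p := by
  refine ⟨hp, hp0, fun z hz => ⟨log (p z), ?_, exp_log ?_⟩⟩
  · have hlog := norm_log_one_add_half_le_self (hle z hz)
    rw [add_sub_cancel] at hlog
    rw [mem_ball_zero_iff]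
    linarith [hle z hz]
  · intro h0
    have := hle z hz
    rw [h0, zero_sub, norm_neg, norm_one] at this
    norm_num at this

lemma memKe_of_norm_deriv_le {f : ℂ → ℂ} (hf : AnalyticOnNhd ℂ f (ball 0 1)) (hf0 : f 0 = 0)
    (hf'0 : deriv f 0 = 1) (hf' : ∀ z ∈ ball (0 : ℂ) 1, ‖deriv f z - 1‖ ≤ 1 / 4)
    (hf'' : ∀ z ∈ ball (0 : ℂ) 1, ‖deriv (deriv f) z‖ ≤ 1 / 4) : memKe f := by
  have hlow (z : ℂ) (hz : z ∈ ball (0 : ℂ) 1) : 3 / 4 ≤ ‖deriv f z‖ := by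
    linarith [hf' z hz, norm_sub_norm_le (1 : ℂ) (deriv f z), norm_sub_rev (1 : ℂ) (deriv f z),
      norm_one (α := ℂ)]
  have hne (z : ℂ) (hz : z ∈ ball (0 : ℂ) 1) : deriv f z ≠ 0 :=
    norm_pos_iff.mp ((by norm_num : (0 : ℝ) < 3 / 4).trans_le (hlow z hz))
  refine ⟨hf, hf0, hf'0, hne, memPe_of_norm_sub_one_le ?_ (by simp) fun z hz => ?_⟩
  · exact analyticOnNhd_const.add ((analyticOnNhd_id.mul hf.deriv.deriv).div hf.deriv hne)
  · rw [add_sub_cancel_left, norm_div, norm_mul, div_le_iff₀ (by linarith [hlow z hz])]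
    have hz1 : ‖z‖ ≤ 1 := (mem_ball_zero_iff.mp hz).le
    nlinarith [hf'' z hz, hlow z hz, norm_nonneg z, norm_nonneg (deriv (deriv f) z)]

lemma memKe_of_eqOn_tsum {f : ℂ → ℂ} {A : ℕ → ℂ}
    (hf : EqOn f (fun z => ∑' n, A n * z ^ n) (ball 0 1)) (hA0 : A 0 = 0) (hA1 : A 1 = 1)
    (hA'' : Summable fun n => ‖derivCoeff (derivCoeff A) n‖)
    (hle : ∑' n, ‖derivCoeff (derivCoeff A) n‖ ≤ 1 / 4) : memKe f := by
  have hA' := summable_norm_of_summable_norm_derivCoeff hA''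
  have hA := summable_norm_of_summable_norm_derivCoeff hA'
  have hzero : (0 : ℂ) ∈ ball (0 : ℂ) 1 := mem_ball_self one_pos
  have hdf : EqOn (deriv f) (fun z => ∑' n, derivCoeff A n * z ^ n) (ball 0 1) := fun z hz =>
    (hf.deriv isOpen_ball hz).trans (hasDerivAt_tsum_mul_pow hA hz).deriv
  have hddf : EqOn (deriv (deriv f)) (fun z => ∑' n, derivCoeff (derivCoeff A) n * z ^ n)
      (ball 0 1) := fun z hz =>
    (hdf.deriv isOpen_ball hz).trans (hasDerivAt_tsum_mul_pow hA' hz).deriv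
  refine memKe_of_norm_deriv_le ?_ ?_ ?_ (fun z hz => ?_) (fun z hz => ?_)
  · refine (DifferentiableOn.analyticOnNhd (fun z hz => ?_) isOpen_ball).congr isOpen_ball hf.symm
    exact (hasDerivAt_tsum_mul_pow hA hz).differentiableAt.differentiableWithinAt
  · rw [hf hzero]
    simp only [tsum_mul_zero_pow, hA0]
  · rw [hdf hzero]
    simp only [tsum_mul_zero_pow, derivCoeff, hA1]
    norm_num
  · have hz1 : ‖z‖ ≤ 1 := (mem_ball_zero_iff.mp hz).le
    have h0 : derivCoeff A 0 = 1 := by simp [derivCoeff, hA1]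
    rw [hdf hz, ← h0]
    refine (norm_tsum_mul_pow_sub_le hA' hz1).trans (le_trans ?_ hle)
    exact (summable_nat_add_iff 1).mpr hA' |>.tsum_le_tsum norm_le_norm_derivCoeff hA''
  · rw [hddf hz]
    exact (norm_tsum_mul_pow_le hA'' (mem_ball_zero_iff.mp hz).le).trans hle

noncomputable def struveCoeff (κ c : ℂ) (n : ℕ) : ℂ := (-c / 4) ^ n / (poch (3 / 2) n * poch κ n)

-- the Taylor coefficients of `χ = (6κ/c) (1 - u_{κ,c})`
noncomputable def struveChiCoeff (κ c : ℂ) (n : ℕ) : ℂ :=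
  6 * κ / c * ((if n = 0 then 1 else 0) - struveCoeff κ c n)

section StruveCoeff

variable {κ c : ℂ}

lemma struveU_eq_tsum (z : ℂ) : struveU κ c z = ∑' n, struveCoeff κ c n * z ^ n := rfl

lemma struveCoeff_zero : struveCoeff κ c 0 = 1 := by
  simp [struveCoeff, poch]

lemma struveCoeff_succ (n : ℕ) :
    struveCoeff κ c (n + 1) = struveCoeff κ c n * (-c / 4 / ((3 / 2 + n) * (κ + n))) := by
  simp only [struveCoeff, poch, Finset.prod_range_succ, pow_succ]
  rw [mul_mul_mul_comm, mul_div_mul_comm]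

lemma struveChiCoeff_zero : struveChiCoeff κ c 0 = 0 := by
  simp [struveChiCoeff, struveCoeff_zero]

lemma struveChiCoeff_succ (n : ℕ) :
    struveChiCoeff κ c (n + 1) = -(6 * κ / c) * struveCoeff κ c (n + 1) := by
  simp [struveChiCoeff]

lemma struveChiCoeff_one (hκ : κ ≠ 0) (hc : c ≠ 0) : struveChiCoeff κ c 1 = 1 := by
  rw [struveChiCoeff_succ, struveCoeff_succ, struveCoeff_zero, Nat.cast_zero, add_zero, add_zero]
  field_simp
  ring

lemma mul_one_sub_struveU_eq_tsum {z : ℂ} (hz : Summable fun n => struveCoeff κ c n * z ^ n) :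
    6 * κ / c * (1 - struveU κ c z) = ∑' n, struveChiCoeff κ c n * z ^ n := by
  have hδ : HasSum (fun n => (if n = 0 then 1 else 0 : ℂ) * z ^ n) 1 := by
    convert hasSum_ite_eq 0 (1 : ℂ) using 2 with n
    split_ifs <;> simp_all
  rw [struveU_eq_tsum, ← hδ.tsum_eq, ← hδ.summable.tsum_sub hz, ← tsum_mul_left]
  exact tsum_congr fun n => by rw [struveChiCoeff, struveCoeff]; ring

end StruveCoeff

section RealParameter

variable {κ : ℝ} {c : ℂ}

lemma norm_struveCoeff_succ (hκ : 0 < κ) (n : ℕ) :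
    ‖struveCoeff κ c (n + 1)‖ = ‖struveCoeff κ c n‖ * (‖c‖ / 4 / ((3 / 2 + n) * (κ + n))) := by
  have h₁ : (3 / 2 + n : ℂ) = ((3 / 2 + n : ℝ) : ℂ) := by push_cast; ring
  have h₂ : (κ + n : ℂ) = ((κ + n : ℝ) : ℂ) := by push_cast; ring
  rw [struveCoeff_succ, h₁, h₂, norm_mul, norm_div, norm_mul, norm_div, norm_neg, norm_real,
    norm_real, Real.norm_of_nonneg (by positivity), Real.norm_of_nonneg (by positivity)]
  norm_num

lemma summable_norm_struveCoeff (hκ : 0 < κ) : Summable fun n => ‖struveCoeff κ c n‖ := by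
  refine summable_of_ratio_norm_eventually_le (r := 1 / 2) (by norm_num) ?_
  refine Filter.eventually_atTop.mpr ⟨⌈‖c‖ / κ⌉₊, fun n hn => ?_⟩
  have hcn : ‖c‖ ≤ κ * n := by
    rw [← div_le_iff₀' hκ]
    exact (Nat.le_ceil _).trans (by exact_mod_cast hn)
  rw [norm_norm, norm_norm, norm_struveCoeff_succ hκ, mul_comm]
  refine mul_le_mul_of_nonneg_right ?_ (norm_nonneg _)
  rw [div_div, div_le_iff₀ (by positivity)]
  have hn0 : (0 : ℝ) ≤ n := n.cast_nonneg
  nlinarith [mul_nonneg hκ.le hn0, mul_nonneg hn0 hn0]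

lemma norm_struveChiCoeff_succ_succ (hκ : 0 < κ) (n : ℕ) :
    ‖struveChiCoeff κ c (n + 2)‖ =
      ‖struveChiCoeff κ c (n + 1)‖ * (‖c‖ / 4 / ((5 / 2 + n) * (κ + 1 + n))) := by
  rw [struveChiCoeff_succ, struveChiCoeff_succ, norm_mul, norm_mul, norm_struveCoeff_succ hκ,
    mul_assoc]
  push_cast
  ring_nf

lemma norm_derivCoeff_derivCoeff_struveChiCoeff_le (hκ : 0 < κ) (hc : c ≠ 0)
    (hcκ : 15 * ‖c‖ ≤ 14 * κ) (n : ℕ) :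
    ‖derivCoeff (derivCoeff (struveChiCoeff κ c)) n‖ ≤ (1 / 5) ^ (n + 1) := by
  have hA1 : ‖struveChiCoeff κ c 1‖ = 1 := by
    rw [struveChiCoeff_one (ofReal_ne_zero.mpr hκ.ne') hc, norm_one]
  rw [norm_derivCoeff_derivCoeff]
  induction n with
  | zero =>
    rw [norm_struveChiCoeff_succ_succ hκ, zero_add, hA1]
    push_cast
    field_simp
    linarith [norm_nonneg c]
  | succ n ih =>
    have hn : (0 : ℝ) ≤ n := n.cast_nonneg
    rw [norm_struveChiCoeff_succ_succ hκ]
    push_cast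
    set ρ := ‖c‖ / 4 / ((5 / 2 + (n + 1)) * (κ + 1 + (n + 1))) with hρ
    -- the ratio of consecutive terms is `(n + 3) ρ / (n + 1) ≤ 3‖c‖ / (14κ) ≤ 1/5`
    have hratio : (n + 3) * ρ ≤ (n + 1) / 5 := by
      rw [hρ, div_div, mul_div_assoc', div_le_div_iff₀ (by positivity) (by positivity)]
      nlinarith [norm_nonneg c, mul_nonneg hκ.le hn, mul_nonneg (mul_nonneg hκ.le hn) hn,
        mul_nonneg hn hn, mul_nonneg (mul_nonneg hn hn) hn]
    refine le_of_mul_le_mul_left ?_ (by positivity : (0 : ℝ) < n + 1)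
    calc ((n : ℝ) + 1) * ((n + 1 + 1) * (n + 1 + 2) * (‖struveChiCoeff κ c (n + 1 + 1)‖ * ρ))
        = ((n + 1) * (n + 2) * ‖struveChiCoeff κ c (n + 2)‖) * ((n + 3) * ρ) := by ring
      _ ≤ (1 / 5) ^ (n + 1) * ((n + 1) / 5) :=
        mul_le_mul ih hratio (by positivity) (by positivity)
      _ = (n + 1) * (1 / 5) ^ (n + 1 + 1) := by ring

end RealParameter

lemma pos_and_le_of_struve_condition {κ t : ℝ} (ht : 0 < t)
    (h : 2 * κ / Real.exp 1 * (4 * Real.sin 1 + 3 - Real.exp 1) ≥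
      (Real.exp 1 + 1) * t + 4 * (Real.exp 1 - 1) ^ 3 +
        6 * (Real.exp 1 - 1) ^ 2 + 6 / Real.exp 1 - 12 / (Real.exp 1) ^ 2) :
    0 < κ ∧ 15 * t ≤ 14 * κ := by
  set e := Real.exp 1
  have he₁ : 2.7 < e := lt_trans (by norm_num) Real.exp_one_gt_d9
  have he₂ : e < 2.8 := lt_trans Real.exp_one_lt_d9 (by norm_num)
  have hsin₀ : 0 ≤ Real.sin 1 :=
    Real.sin_nonneg_of_nonneg_of_le_pi zero_le_one (by linarith [Real.pi_gt_three])
  have hsin₁ : Real.sin 1 ≤ 1 := Real.sin_le_one 1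
  have htail : 0 ≤ 4 * (e - 1) ^ 3 + 6 * (e - 1) ^ 2 + 6 / e - 12 / e ^ 2 := by
    have : 6 / e - 12 / e ^ 2 = 6 * (e - 2) / e ^ 2 := by field_simp; ring
    have : 0 ≤ 6 * (e - 2) / e ^ 2 := div_nonneg (by linarith) (by positivity)
    nlinarith
  have hlhs : e * ((e + 1) * t) ≤ 2 * κ * (4 * Real.sin 1 + 3 - e) :=
    calc e * ((e + 1) * t) ≤ e * (2 * κ / e * (4 * Real.sin 1 + 3 - e)) :=
          mul_le_mul_of_nonneg_left (by linarith) (by positivity)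
      _ = 2 * κ * (4 * Real.sin 1 + 3 - e) := by field_simp
  have hκ : 0 < κ := by
    by_contra! hκ
    nlinarith [mul_pos (by positivity : (0 : ℝ) < e * (e + 1)) ht]
  have hquad : 30 * (7 - e) ≤ 14 * (e * (e + 1)) := by nlinarith
  refine ⟨hκ, le_of_mul_le_mul_left ?_ (by positivity : (0 : ℝ) < e * (e + 1))⟩
  nlinarith [mul_le_mul_of_nonneg_left hquad hκ.le, mul_le_mul_of_nonneg_left hsin₁ hκ.le]

theorem struve_exponential_convex_general (κ : ℝ)
    (c : ℂ) (hc : c ≠ 0)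
    (h : 2 * κ / Real.exp 1 * (4 * Real.sin 1 + 3 - Real.exp 1) ≥
      (Real.exp 1 + 1) * ‖c‖ + 4 * (Real.exp 1 - 1) ^ 3 +
        6 * (Real.exp 1 - 1) ^ 2 + 6 / Real.exp 1 - 12 / (Real.exp 1) ^ 2) :
    memKe (fun z => 6 * (κ : ℂ) / c * (1 - struveU (κ : ℂ) c z)) := by
  obtain ⟨hκ, hcκ⟩ := pos_and_le_of_struve_condition (norm_pos_iff.mpr hc) h
  have hbound := norm_derivCoeff_derivCoeff_struveChiCoeff_le hκ hc hcκ
  have hgeom : HasSum (fun n : ℕ => (1 / 5 : ℝ) ^ (n + 1)) (1 / 4) := by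
    rw [show (1 / 4 : ℝ) = (1 - 1 / 5)⁻¹ * (1 / 5) by norm_num]
    simp_rw [pow_succ]
    exact (hasSum_geometric_of_lt_one (by norm_num) (by norm_num)).mul_right _
  have hsum : Summable fun n => ‖derivCoeff (derivCoeff (struveChiCoeff κ c)) n‖ :=
    hgeom.summable.of_nonneg_of_le (fun _ => norm_nonneg _) hbound
  refine memKe_of_eqOn_tsum (fun z hz => mul_one_sub_struveU_eq_tsum ?_) struveChiCoeff_zero
    (struveChiCoeff_one (ofReal_ne_zero.mpr hκ.ne') hc) hsum ?_
  · exact .of_norm_bounded (summable_norm_struveCoeff hκ)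
      (norm_mul_pow_le · (mem_ball_zero_iff.mp hz).le)
  · exact (hsum.tsum_le_tsum hbound hgeom.summable).trans hgeom.tsum_eq.le

/-- Sufficient condition for `χ(z) = (6κ/c)(1 − u_{κ,c}(z))` to be exponential convex. -/
theorem struve_exponential_convex (κ : ℝ) (hκ : ∀ n : ℕ, κ ≠ -(n : ℝ))
    (c : ℂ) (hc : c ≠ 0)
    (h : 2 * κ / Real.exp 1 * (4 * Real.sin 1 + 3 - Real.exp 1) ≥
      (Real.exp 1 + 1) * ‖c‖ + 4 * (Real.exp 1 - 1) ^ 3 +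
        6 * (Real.exp 1 - 1) ^ 2 + 6 / Real.exp 1 - 12 / (Real.exp 1) ^ 2) :
    memKe (fun z => 6 * (κ : ℂ) / c * (1 - struveU (κ : ℂ) c z)) :=
  struve_exponential_convex_general κ c hc h
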